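/- arXiv:2304.07416 — 2 statements merged into one kernel-verified Lean document; each statement's English description precedes it below -/
import Mathlib

section
/- For a Banach sublattice F of a Banach lattice E, the absolute weak topology |σ|(F,F*) on F coincides with the subspace topology induced on F by the absolute weak topology |σ|(E,E*) of E. -/
set_option linter.unusedSectionVars false

open Filter Topology Pointwise MeasureTheory


section Defs

variable {E : Type*} [NormedAddCommGroup E] [Lattice E] [HasSolidNorm E] [IsOrderedAddMonoid E] [NormedSpace ℝ E]

/-- The pseudometric on a Banach lattice induced by a positive continuous linear functional `f`,
given by `dist x y = f |x - y|`. -/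
noncomputable def absSeminormDist (f : E →L[ℝ] ℝ) (hf : ∀ x : E, 0 ≤ x → 0 ≤ f x) :
    PseudoMetricSpace E where
  dist x y := f |x - y|
  dist_self x := by simp
  dist_comm x y := by simp [abs_sub_comm]
  dist_triangle x y z := by
    have h1 : |x - z| ≤ |x - y| + |y - z| := by
      calc |x - z| = |(x - y) + (y - z)| := by abel_nf
      _ ≤ |x - y| + |y - z| := abs_add_le _ _
    have h2 := hf (|x - y| + |y - z| - |x - z|) (sub_nonneg.mpr h1)
    simp only [map_sub, map_add] at h2
    try dsimp
    linarith

/-- The absolute weak topology `|σ|(E, E*)` on a Banach lattice `E`: the topology generated by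
the lattice seminorms `x ↦ |x*|(|x|) = x*(|x|)`, for `x*` ranging over the positive continuous
linear functionals on `E`. -/
noncomputable def absWeakTopology (E : Type*) [NormedAddCommGroup E] [Lattice E] [HasSolidNorm E] [IsOrderedAddMonoid E] [NormedSpace ℝ E] :
    TopologicalSpace E :=
  ⨅ f : {f : E →L[ℝ] ℝ // ∀ x : E, 0 ≤ x → 0 ≤ f x},
    (absSeminormDist f.1 f.2).toUniformSpace.toTopologicalSpace

end Defs

/-!
A positive functional `f` on `E` restricts to the positive functional `f ∘ T` on `F`, and since
`T` commutes with `|·|`, the seminorm `x ↦ f |x|` pulls back to `y ↦ (f ∘ T) |y|`. Conversely every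
positive `g` on `F` is such a restriction: extend `g` by Hahn–Banach under the sublinear bound
`x ↦ ‖g‖ ‖x⁺‖`, which dominates `g` on `F` because `g y ≤ g y⁺ ≤ ‖g‖ ‖y⁺‖`, and which vanishes on
the negative cone, forcing the extension to be positive. So both topologies are the infimum of the
same family of pseudometric topologies.
-/

section PosPart

variable {𝕜 E F : Type*}

lemma posPart_add_le [Lattice E] [AddCommGroup E] [IsOrderedAddMonoid E] (x y : E) :
    (x + y)⁺ ≤ x⁺ + y⁺ :=
  sup_le (add_le_add (le_posPart x) (le_posPart y))
    (add_nonneg (posPart_nonneg x) (posPart_nonneg y))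

lemma posPart_smul_of_pos [Field 𝕜] [LinearOrder 𝕜] [IsStrictOrderedRing 𝕜] [Lattice E]
    [AddCommGroup E] [IsOrderedAddMonoid E] [Module 𝕜 E] [PosSMulMono 𝕜 E] {c : 𝕜} (hc : 0 < c)
    (x : E) : (c • x)⁺ = c • x⁺ := by
  simpa only [posPart_def, OrderIso.smulRight_apply, smul_zero] using
    ((OrderIso.smulRight (β := E) hc).map_sup x 0).symm

lemma map_sup_of_map_abs [DivisionRing 𝕜] [NeZero (2 : 𝕜)] [Lattice E] [AddCommGroup E]
    [IsOrderedAddMonoid E] [Module 𝕜 E] [Lattice F] [AddCommGroup F] [IsOrderedAddMonoid F]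
    [Module 𝕜 F] (T : F →ₗ[𝕜] E) (hT : ∀ y, T |y| = |T y|) (x y : F) :
    T (x ⊔ y) = T x ⊔ T y := by
  rw [sup_eq_half_smul_add_add_abs_sub' 𝕜, sup_eq_half_smul_add_add_abs_sub' 𝕜, map_smul, map_add,
    map_add, hT, map_sub]

lemma map_posPart_of_map_abs [DivisionRing 𝕜] [NeZero (2 : 𝕜)] [Lattice E] [AddCommGroup E]
    [IsOrderedAddMonoid E] [Module 𝕜 E] [Lattice F] [AddCommGroup F] [IsOrderedAddMonoid F]
    [Module 𝕜 F] (T : F →ₗ[𝕜] E) (hT : ∀ y, T |y| = |T y|) (y : F) : T y⁺ = (T y)⁺ := by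
  rw [posPart_def, posPart_def, map_sup_of_map_abs T hT, map_zero]

end PosPart

section NormedLattice

variable {E F : Type*} [NormedAddCommGroup E] [Lattice E] [HasSolidNorm E] [IsOrderedAddMonoid E]

lemma norm_le_norm_of_nonneg_of_le {x y : E} (hx : 0 ≤ x) (hxy : x ≤ y) : ‖x‖ ≤ ‖y‖ :=
  norm_le_norm_of_abs_le_abs (by rwa [abs_of_nonneg hx, abs_of_nonneg (hx.trans hxy)])

lemma norm_posPart_le (x : E) : ‖x⁺‖ ≤ ‖x‖ :=
  norm_le_norm_of_abs_le_abs <| by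
    rw [abs_of_nonneg (posPart_nonneg x)]
    exact sup_le (le_abs_self x) (abs_nonneg x)

lemma norm_posPart_add_le (x y : E) : ‖(x + y)⁺‖ ≤ ‖x⁺‖ + ‖y⁺‖ :=
  (norm_le_norm_of_nonneg_of_le (posPart_nonneg _) (posPart_add_le x y)).trans (norm_add_le _ _)

variable [NormedSpace ℝ E]

theorem exists_nonneg_extension_of_le_norm_posPart [PosSMulMono ℝ E] (p : Submodule ℝ E)
    (h : p →ₗ[ℝ] ℝ) {C : ℝ} (hC : 0 ≤ C) (hle : ∀ x : p, h x ≤ C * ‖(x : E)⁺‖) :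
    ∃ f : E →L[ℝ] ℝ, (∀ x, 0 ≤ x → 0 ≤ f x) ∧ ∀ x : p, f x = h x := by
  obtain ⟨f, hfh, hfN⟩ := exists_extension_of_le_sublinear ⟨p, h⟩ (fun x : E => C * ‖x⁺‖)
    (fun c hc x => by
      simp only [posPart_smul_of_pos hc, norm_smul, Real.norm_of_nonneg hc.le]
      ring)
    (fun x y => by
      rw [← mul_add]
      exact mul_le_mul_of_nonneg_left (norm_posPart_add_le x y) hC)
    hle
  have hf_le : ∀ x, f x ≤ C * ‖x‖ := fun x =>
    (hfN x).trans (mul_le_mul_of_nonneg_left (norm_posPart_le x) hC)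
  refine ⟨f.mkContinuous C fun x => ?_, fun x hx => ?_, hfh⟩
  · rw [Real.norm_eq_abs, abs_le]
    have := hf_le (-x)
    rw [map_neg, norm_neg] at this
    exact ⟨by linarith, hf_le x⟩
  · have := hfN (-x)
    rwa [posPart_eq_zero.2 (neg_nonpos.2 hx), norm_zero, mul_zero, map_neg, neg_nonpos] at this

variable [NormedAddCommGroup F] [Lattice F] [IsOrderedAddMonoid F] [NormedSpace ℝ F]

theorem exists_nonneg_extension_of_isometry_of_map_abs [PosSMulMono ℝ E] (T : F →ₗ[ℝ] E)
    (hisom : ∀ y, ‖T y‖ = ‖y‖) (hlat : ∀ y, T |y| = |T y|) (g : F →L[ℝ] ℝ)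
    (hg : ∀ y, 0 ≤ y → 0 ≤ g y) :
    ∃ f : E →L[ℝ] ℝ, (∀ x, 0 ≤ x → 0 ≤ f x) ∧ ∀ y, f (T y) = g y := by
  let e := LinearEquiv.ofInjective T (LinearIsometry.injective ⟨T, hisom⟩)
  obtain ⟨f, hf, hfe⟩ := exists_nonneg_extension_of_le_norm_posPart (LinearMap.range T)
    (g.toLinearMap ∘ₗ e.symm.toLinearMap) (norm_nonneg g) fun x => by
      obtain ⟨y, rfl⟩ := e.surjective x
      have hy : g y ≤ g y⁺ := by
        simpa using hg _ (sub_nonneg.2 (le_posPart y))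
      calc (g.toLinearMap ∘ₗ e.symm.toLinearMap) (e y) = g y := by simp
        _ ≤ ‖g‖ * ‖y⁺‖ := hy.trans ((le_abs_self _).trans (g.le_opNorm _))
        _ = ‖g‖ * ‖((e y : E))⁺‖ := by
          rw [LinearEquiv.ofInjective_apply, ← map_posPart_of_map_abs T hlat, hisom]
  exact ⟨f, hf, fun y => by simpa [e] using hfe (e y)⟩

end NormedLattice

lemma induced_absSeminormDist {E F : Type*} [NormedAddCommGroup E] [Lattice E] [HasSolidNorm E]
    [IsOrderedAddMonoid E] [NormedSpace ℝ E] [NormedAddCommGroup F] [Lattice F] [HasSolidNorm F]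
    [IsOrderedAddMonoid F] [NormedSpace ℝ F] (T : F →ₗ[ℝ] E) (hlat : ∀ y, T |y| = |T y|)
    {f : E →L[ℝ] ℝ} (hf : ∀ x, 0 ≤ x → 0 ≤ f x) {g : F →L[ℝ] ℝ} (hg : ∀ y, 0 ≤ y → 0 ≤ g y)
    (hfg : ∀ y, f (T y) = g y) :
    TopologicalSpace.induced T (absSeminormDist f hf).toUniformSpace.toTopologicalSpace =
      (absSeminormDist g hg).toUniformSpace.toTopologicalSpace := by
  rw [← UniformSpace.toTopologicalSpace_comap]
  change (PseudoMetricSpace.induced T (absSeminormDist f hf)).toUniformSpace.toTopologicalSpace = _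
  congr 2
  ext y y'
  change f |T y - T y'| = g |y - y'|
  rw [← map_sub, ← hlat, hfg]

theorem absWeakTopology_sublattice_general {E F : Type*} [NormedAddCommGroup E] [Lattice E] [HasSolidNorm E] [IsOrderedAddMonoid E] [NormedSpace ℝ E] [PosSMulStrictMono ℝ E]
    [NormedAddCommGroup F] [Lattice F] [HasSolidNorm F] [IsOrderedAddMonoid F] [NormedSpace ℝ F]
    (T : F →ₗ[ℝ] E) (hisom : ∀ y : F, ‖T y‖ = ‖y‖) (hlat : ∀ y : F, T |y| = |T y|) :
    absWeakTopology F = TopologicalSpace.induced T (absWeakTopology E) := by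
  have hTpos : ∀ y, 0 ≤ y → 0 ≤ T y := fun y hy => by
    rw [← abs_of_nonneg hy, hlat]
    exact abs_nonneg _
  let Tc : F →L[ℝ] E := (⟨T, hisom⟩ : F →ₗᵢ[ℝ] E).toContinuousLinearMap
  rw [absWeakTopology, absWeakTopology, induced_iInf]
  refine le_antisymm (le_iInf fun f => ?_) (le_iInf fun g => ?_)
  · exact iInf_le_of_le ⟨f.1.comp Tc, fun y hy => f.2 _ (hTpos y hy)⟩
      (induced_absSeminormDist T hlat f.2 _ fun _ => rfl).ge
  · obtain ⟨f, hf, hfg⟩ := exists_nonneg_extension_of_isometry_of_map_abs T hisom hlat g.1 g.2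
    exact iInf_le_of_le ⟨f, hf⟩ (induced_absSeminormDist T hlat hf g.2 hfg).le

/-- For a Banach sublattice `F` of a Banach lattice `E` (realized as the image of an isometric
lattice embedding `T : F → E`), the absolute weak topology of `F` coincides with the topology
induced by the absolute weak topology of `E`. -/
theorem absWeakTopology_sublattice {E F : Type*} [NormedAddCommGroup E] [Lattice E] [HasSolidNorm E] [IsOrderedAddMonoid E] [NormedSpace ℝ E] [PosSMulStrictMono ℝ E] [CompleteSpace E]
    [NormedAddCommGroup F] [Lattice F] [HasSolidNorm F] [IsOrderedAddMonoid F] [NormedSpace ℝ F] [PosSMulStrictMono ℝ F] [CompleteSpace F]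
    (T : F →ₗ[ℝ] E) (hisom : ∀ y : F, ‖T y‖ = ‖y‖) (hlat : ∀ y : F, T |y| = |T y|) :
    absWeakTopology F = TopologicalSpace.induced T (absWeakTopology E) :=
  absWeakTopology_sublattice_general T hisom hlat
end

section
/- The set K = {r_n : n ∈ ℕ} ∪ {0}, where (r_n) are the Rademacher functions in L¹[0,1], is weakly compact but not absolutely weakly sequentially compact. -/
set_option linter.unusedSectionVars false

open Filter Topology Pointwise MeasureTheory

/-- The weak topology `σ(X, X*)` on a Banach space `X`. -/
noncomputable def weakTopology (X : Type*) [NormedAddCommGroup X] [NormedSpace ℝ X] :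
    TopologicalSpace X :=
  TopologicalSpace.induced (fun x => fun f : X →L[ℝ] ℝ => f x) Pi.topologicalSpace

/-!
The Rademacher functions are orthonormal in `L²[0,1]`, so `‖∑ cₙ rₙ‖₁ ≤ ‖∑ cₙ rₙ‖₂ = √(∑ cₙ²)`.
Testing this against `∑ f(rₙ) rₙ` shows that `(f(rₙ))` is square-summable for every functional
`f`, hence `rₙ → 0` weakly and `{rₙ} ∪ {0}` is weakly compact. On the other hand the integral is a
positive functional whose seminorm `x ↦ ∫ |x|` is the `L¹` norm, so an absolutely weakly
convergent subsequence would converge in norm, necessarily to its weak limit `0`; but `‖rₙ‖₁ = 1`.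
-/

section WeakTopology

variable {X : Type*} [NormedAddCommGroup X] [NormedSpace ℝ X]

theorem tendsto_weakTopology_iff {ι : Type*} {l : Filter ι} {u : ι → X} {a : X} :
    Tendsto u l (@nhds X (weakTopology X) a) ↔
      ∀ f : X →L[ℝ] ℝ, Tendsto (fun i => f (u i)) l (𝓝 (f a)) := by
  rw [weakTopology, nhds_induced, tendsto_comap_iff, tendsto_pi_nhds]
  rfl

theorem sum_sq_apply_le_opNorm_sq {ι : Type*} {u : ι → X}
    (hu : ∀ (s : Finset ι) (c : ι → ℝ), ‖∑ i ∈ s, c i • u i‖ ≤ √(∑ i ∈ s, c i ^ 2))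
    (f : X →L[ℝ] ℝ) (s : Finset ι) : ∑ i ∈ s, f (u i) ^ 2 ≤ ‖f‖ ^ 2 := by
  set S := ∑ i ∈ s, f (u i) ^ 2
  have hS : S ≤ ‖f‖ * √S := calc
    S = f (∑ i ∈ s, f (u i) • u i) := by simp [S, map_sum, sq]
    _ ≤ ‖f‖ * ‖∑ i ∈ s, f (u i) • u i‖ := (le_abs_self _).trans (f.le_opNorm _)
    _ ≤ ‖f‖ * √S := by gcongr; exact hu s _
  have hsq : √S ^ 2 = S := Real.sq_sqrt (Finset.sum_nonneg fun i _ => sq_nonneg _)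
  nlinarith [Real.sqrt_nonneg S, norm_nonneg f]

theorem tendsto_apply_zero_of_norm_sum_smul_le_sqrt {u : ℕ → X}
    (hu : ∀ (s : Finset ℕ) (c : ℕ → ℝ), ‖∑ n ∈ s, c n • u n‖ ≤ √(∑ n ∈ s, c n ^ 2))
    (f : X →L[ℝ] ℝ) : Tendsto (fun n => f (u n)) atTop (𝓝 0) := by
  have hsum : Summable fun n => f (u n) ^ 2 :=
    summable_of_sum_range_le (fun n => sq_nonneg _)
      fun n => sum_sq_apply_le_opNorm_sq hu f (Finset.range n)
  rw [tendsto_zero_iff_abs_tendsto_zero]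
  simpa [Function.comp_def, Real.sqrt_sq_eq_abs] using hsum.tendsto_atTop_zero.sqrt

theorem not_tendsto_of_norm_eq_one_of_tendsto_apply_zero {ι : Type*} {l : Filter ι} [l.NeBot]
    {u : ι → X} (hnorm : ∀ i, ‖u i‖ = 1)
    (hweak : ∀ f : X →L[ℝ] ℝ, Tendsto (fun i => f (u i)) l (𝓝 0)) (a : X) :
    ¬ Tendsto u l (𝓝 a) := by
  intro ha
  obtain ⟨g, -, hga⟩ := exists_dual_vector'' ℝ a
  have ha0 : a = 0 := by
    have := tendsto_nhds_unique ((g.continuous.tendsto a).comp ha) (hweak g)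
    rwa [hga, RCLike.ofReal_real_eq_id, id, norm_eq_zero] at this
  subst ha0
  have := tendsto_nhds_unique ha.norm (tendsto_const_nhds.congr fun i => (hnorm i).symm)
  simp at this

end WeakTopology

section AbsWeakTopology

variable {α : Type*} [MeasurableSpace α] {μ : Measure α}

theorem L1.integralCLM_nonneg {x : Lp ℝ 1 μ} (hx : 0 ≤ x) :
    0 ≤ (L1.integralCLM : Lp ℝ 1 μ →L[ℝ] ℝ) x := by
  rw [← L1.integral_eq, L1.integral_eq_integral]
  exact integral_nonneg_of_ae ((Lp.coeFn_nonneg x).mpr hx)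

theorem L1.integralCLM_abs (x : Lp ℝ 1 μ) : (L1.integralCLM : Lp ℝ 1 μ →L[ℝ] ℝ) |x| = ‖x‖ := by
  rw [← L1.integral_eq, L1.integral_eq_integral, L1.norm_eq_integral_norm]
  exact integral_congr_ae ((Lp.coeFn_abs x).mono fun t ht => ht)

theorem tendsto_of_tendsto_absWeakTopology {ι : Type*} {l : Filter ι} {u : ι → Lp ℝ 1 μ}
    {a : Lp ℝ 1 μ} (h : Tendsto u l (@nhds _ (absWeakTopology (Lp ℝ 1 μ)) a)) :
    Tendsto u l (𝓝 a) := by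
  have hpos : ∀ x : Lp ℝ 1 μ, 0 ≤ x → 0 ≤ (L1.integralCLM : Lp ℝ 1 μ →L[ℝ] ℝ) x :=
    fun _ => L1.integralCLM_nonneg
  have hle : absWeakTopology (Lp ℝ 1 μ) ≤
      (absSeminormDist _ hpos).toUniformSpace.toTopologicalSpace := by
    unfold absWeakTopology
    exact iInf_le (fun f : {f : Lp ℝ 1 μ →L[ℝ] ℝ // ∀ x, 0 ≤ x → 0 ≤ f x} =>
      (absSeminormDist f.1 f.2).toUniformSpace.toTopologicalSpace) ⟨_, hpos⟩
  refine tendsto_iff_norm_sub_tendsto_zero.mpr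
    (((@tendsto_iff_dist_tendsto_zero _ _ (absSeminormDist _ hpos) _ _ _).mp
      (h.mono_right (nhds_mono hle))).congr fun i => ?_)
  exact L1.integralCLM_abs (u i - a)

end AbsWeakTopology

section Orthonormal

variable {Ω : Type*} [MeasurableSpace Ω] {μ : Measure Ω}

theorem integral_abs_le_sqrt_integral_sq [IsProbabilityMeasure μ] {g : Ω → ℝ} (hg : MemLp g 2 μ) :
    ∫ ω, |g ω| ∂μ ≤ √(∫ ω, g ω ^ 2 ∂μ) := by
  have hvar := ProbabilityTheory.variance_eq_sub hg.abs ▸ ProbabilityTheory.variance_nonneg _ μ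
  simp only [Pi.pow_apply, Pi.abs_apply, sq_abs] at hvar
  exact Real.le_sqrt_of_sq_le (by linarith)

variable {ι : Type*} [DecidableEq ι] {g : ι → Ω → ℝ}

theorem integral_sq_sum_of_orthonormal (hg : ∀ i, MemLp (g i) 2 μ)
    (horth : ∀ i j, ∫ ω, g i ω * g j ω ∂μ = if i = j then 1 else 0) (s : Finset ι) (c : ι → ℝ) :
    ∫ ω, (∑ i ∈ s, c i * g i ω) ^ 2 ∂μ = ∑ i ∈ s, c i ^ 2 := by
  have hint : ∀ i j, Integrable (fun ω => c i * c j * (g i ω * g j ω)) μ := fun i j =>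
    ((hg i).integrable_mul (hg j)).const_mul _
  calc ∫ ω, (∑ i ∈ s, c i * g i ω) ^ 2 ∂μ
      = ∫ ω, ∑ i ∈ s, ∑ j ∈ s, c i * c j * (g i ω * g j ω) ∂μ := by
        congr with ω
        rw [sq, Finset.sum_mul_sum]
        simp only [mul_mul_mul_comm]
    _ = ∑ i ∈ s, ∑ j ∈ s, c i * c j * (if i = j then 1 else 0) := by
        rw [integral_finsetSum _ fun i _ => integrable_finsetSum _ fun j _ => hint i j]
        refine Finset.sum_congr rfl fun i _ => ?_
        rw [integral_finsetSum _ fun j _ => hint i j]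
        simp_rw [integral_const_mul, horth]
    _ = ∑ i ∈ s, c i ^ 2 := by simp [sq]

theorem norm_sum_smul_le_sqrt_of_orthonormal [IsProbabilityMeasure μ]
    (hg : ∀ i, MemLp (g i) 2 μ) (horth : ∀ i j, ∫ ω, g i ω * g j ω ∂μ = if i = j then 1 else 0)
    {r : ι → Lp ℝ 1 μ} (hr : ∀ i, r i =ᵐ[μ] g i) (s : Finset ι) (c : ι → ℝ) :
    ‖∑ i ∈ s, c i • r i‖ ≤ √(∑ i ∈ s, c i ^ 2) := by
  have hsum : ⇑(∑ i ∈ s, c i • r i) =ᵐ[μ] fun ω => ∑ i ∈ s, c i * g i ω := by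
    have hsmul : ∀ᵐ ω ∂μ, ∀ i ∈ s, (c i • r i) ω = c i * g i ω :=
      (ae_ball_iff s.countable_toSet).mpr fun i _ => by
        filter_upwards [Lp.coeFn_smul (c i) (r i), hr i] with ω h1 h2
        rw [h1, Pi.smul_apply, h2, smul_eq_mul]
    filter_upwards [Lp.coeFn_fun_finsetSum s fun i => c i • r i, hsmul] with ω h1 h2
    rw [h1]
    exact Finset.sum_congr rfl h2
  rw [L1.norm_eq_integral_norm, ← integral_sq_sum_of_orthonormal hg horth s c]
  refine (integral_congr_ae (hsum.fun_comp norm)).trans_le ?_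
  exact integral_abs_le_sqrt_integral_sq
    (memLp_finsetSum s fun i _ => (hg i).const_mul (c i))

end Orthonormal

theorem Function.Antiperiodic.intervalIntegral_add_two_mul_eq_zero {E : Type*}
    [NormedAddCommGroup E] [NormedSpace ℝ E] {f : ℝ → E} {c : ℝ} (hf : Function.Antiperiodic f c)
    (hfi : ∀ a b, IntervalIntegrable f volume a b) (t : ℝ) :
    ∫ x in t..t + 2 * c, f x = 0 := by
  have hshift : ∫ x in t + c..t + 2 * c, f x = -∫ x in t..t + c, f x := by
    simp_rw [← intervalIntegral.integral_neg, ← hf _, intervalIntegral.integral_comp_add_right,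
      two_mul, add_assoc]
  rw [← intervalIntegral.integral_add_adjacent_intervals (hfi t (t + c)) (hfi _ _), hshift,
    add_neg_cancel]

theorem Function.Antiperiodic.intervalIntegral_add_nsmul_eq_zero {E : Type*}
    [NormedAddCommGroup E] [NormedSpace ℝ E] {f : ℝ → E} {c : ℝ} (hf : Function.Antiperiodic f c)
    (hfi : ∀ a b, IntervalIntegrable f volume a b) (k : ℕ) (t : ℝ) :
    ∫ x in t..t + k • (2 * c), f x = 0 := by
  have := hf.periodic_two_mul.intervalIntegral_add_zsmul_eq k t hfi
  rw [natCast_zsmul] at this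
  rw [this, hf.intervalIntegral_add_two_mul_eq_zero hfi, smul_zero]

theorem Real.measurable_sign : Measurable Real.sign :=
  Measurable.ite measurableSet_Iio measurable_const
    (Measurable.ite measurableSet_Ioi measurable_const measurable_const)

theorem Real.abs_sign_le_one (x : ℝ) : |Real.sign x| ≤ 1 := by
  rcases Real.sign_apply_eq x with h | h | h <;> simp [h]

theorem Real.abs_sign_of_ne_zero {x : ℝ} (hx : x ≠ 0) : |Real.sign x| = 1 := by
  rcases Real.sign_apply_eq_of_ne_zero x hx with h | h <;> simp [h]

instance : IsProbabilityMeasure (volume.restrict (Set.Icc (0 : ℝ) 1)) :=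
  ⟨by simp⟩

noncomputable def rademacher (n : ℕ) (t : ℝ) : ℝ := Real.sign (Real.sin (2 ^ n * Real.pi * t))

namespace rademacher

theorem measurable (n : ℕ) : Measurable (rademacher n) :=
  Real.measurable_sign.comp (by fun_prop)

theorem abs_le_one (n : ℕ) (t : ℝ) : |rademacher n t| ≤ 1 := Real.abs_sign_le_one _

theorem intervalIntegrable (n : ℕ) (a b : ℝ) : IntervalIntegrable (rademacher n) volume a b :=
  (intervalIntegrable_const (c := (1 : ℝ))).mono_fun (measurable n).aestronglyMeasurable
    (ae_of_all _ fun t => by simpa using abs_le_one n t)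

theorem antiperiodic (n : ℕ) : Function.Antiperiodic (rademacher n) (2 ^ n)⁻¹ := fun t => by
  have h : 2 ^ n * Real.pi * (t + (2 ^ n)⁻¹) = 2 ^ n * Real.pi * t + Real.pi := by
    field_simp
  rw [rademacher, h, Real.sin_add_pi, Real.sign_neg, rademacher]

theorem abs_ae_eq_one (n : ℕ) : ∀ᵐ t ∂volume, |rademacher n t| = 1 := by
  have hc : (2 : ℝ) ^ n * Real.pi ≠ 0 := by positivity
  have hzero : {t : ℝ | Real.sin (2 ^ n * Real.pi * t) = 0} ⊆
      Set.range fun k : ℤ => k * Real.pi / (2 ^ n * Real.pi) := fun t ht => by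
    obtain ⟨k, hk⟩ := Real.sin_eq_zero_iff.mp ht
    exact ⟨k, show k * Real.pi / _ = t by rw [hk, mul_div_cancel_left₀ _ hc]⟩
  filter_upwards [(Set.countable_range fun k : ℤ => k * Real.pi / (2 ^ n * Real.pi)).ae_notMem
    volume] with t ht
  exact Real.abs_sign_of_ne_zero fun h0 => ht (hzero h0)

theorem eq_neg_one_pow_of_mem_Ioo {m j : ℕ} {t : ℝ}
    (ht : t ∈ Set.Ioo ((j : ℝ) / 2 ^ m) ((j + 1) / 2 ^ m)) : rademacher m t = (-1) ^ j := by
  have h2m : (0 : ℝ) < 2 ^ m := by positivity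
  obtain ⟨hlo, hhi⟩ := ht
  rw [div_lt_iff₀ h2m] at hlo
  rw [lt_div_iff₀ h2m] at hhi
  set y := 2 ^ m * Real.pi * t - j * Real.pi
  have hy : 0 < Real.sin y :=
    Real.sin_pos_of_pos_of_lt_pi (by nlinarith [Real.pi_pos]) (by nlinarith [Real.pi_pos])
  rw [rademacher, show 2 ^ m * Real.pi * t = y + j * Real.pi by ring, Real.sin_add_nat_mul_pi]
  rcases neg_one_pow_eq_or ℝ j with h | h <;> rw [h]
  · rw [one_mul, Real.sign_of_pos hy]
  · rw [neg_one_mul, Real.sign_neg, Real.sign_of_pos hy]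

theorem intervalIntegrable_mul (n m : ℕ) (a b : ℝ) :
    IntervalIntegrable (fun t => rademacher n t * rademacher m t) volume a b :=
  (intervalIntegrable_const (c := (1 : ℝ))).mono_fun
    ((measurable n).mul (measurable m)).aestronglyMeasurable (ae_of_all _ fun t => by
      simpa [abs_mul] using mul_le_one₀ (abs_le_one n t) (abs_nonneg _) (abs_le_one m t))

/-- On a dyadic interval of length `2⁻ᵐ`, `rademacher m` is constant and `rademacher n` runs
through `2 ^ (n - m - 1)` full periods. -/
theorem intervalIntegral_mul_dyadic_eq_zero {m n : ℕ} (h : m < n) (j : ℕ) :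
    ∫ t in (j : ℝ) / 2 ^ m..(j + 1) / 2 ^ m, rademacher n t * rademacher m t = 0 := by
  have hconst : ∀ᵐ t ∂volume, t ∈ Set.uIoc ((j : ℝ) / 2 ^ m) ((j + 1) / 2 ^ m) →
      rademacher n t * rademacher m t = (-1) ^ j * rademacher n t := by
    have hlt : (j : ℝ) / 2 ^ m ≤ (j + 1) / 2 ^ m := by gcongr; linarith
    filter_upwards [(Set.countable_singleton (((j : ℝ) + 1) / 2 ^ m)).ae_notMem volume]
      with t hend ht
    rw [Set.uIoc_of_le hlt] at ht
    rw [eq_neg_one_pow_of_mem_Ioo ⟨ht.1, ht.2.lt_of_ne hend⟩, mul_comm]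
  rw [intervalIntegral.integral_congr_ae hconst, intervalIntegral.integral_const_mul]
  obtain ⟨d, rfl⟩ : ∃ d, n = m + 1 + d := ⟨n - m - 1, by omega⟩
  have hlen : ((j : ℝ) + 1) / 2 ^ m = j / 2 ^ m + 2 ^ d • (2 * (2 ^ (m + 1 + d))⁻¹) := by
    rw [nsmul_eq_mul, pow_add, pow_add]
    field_simp
    push_cast
    ring
  rw [hlen, (antiperiodic _).intervalIntegral_add_nsmul_eq_zero (intervalIntegrable _), mul_zero]

theorem intervalIntegral_mul_eq_zero_of_lt {m n : ℕ} (h : m < n) :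
    ∫ t in (0 : ℝ)..1, rademacher n t * rademacher m t = 0 := by
  have hsum := intervalIntegral.sum_integral_adjacent_intervals
    (a := fun j : ℕ => (j : ℝ) / 2 ^ m) (n := 2 ^ m)
    (fun j _ => intervalIntegrable_mul n m _ _)
  rw [Nat.cast_zero, zero_div, Nat.cast_pow, Nat.cast_ofNat, div_self (by positivity)] at hsum
  rw [← hsum]
  exact Finset.sum_eq_zero fun j _ => by
    simpa only [Nat.cast_succ] using intervalIntegral_mul_dyadic_eq_zero h j

theorem integral_mul (n m : ℕ) :
    ∫ t in Set.Icc (0 : ℝ) 1, rademacher n t * rademacher m t = if n = m then 1 else 0 := by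
  rw [integral_Icc_eq_integral_Ioc, ← intervalIntegral.integral_of_le zero_le_one]
  rcases lt_trichotomy n m with h | rfl | h
  · simp only [mul_comm (rademacher n _), intervalIntegral_mul_eq_zero_of_lt h, if_neg h.ne]
  · have hsq : ∀ᵐ t ∂volume, t ∈ Set.uIoc (0 : ℝ) 1 → rademacher n t * rademacher n t = 1 := by
      filter_upwards [abs_ae_eq_one n] with t ht _
      rw [← abs_mul_abs_self, ht, one_mul]
    simp [intervalIntegral.integral_congr_ae hsq]
  · rw [intervalIntegral_mul_eq_zero_of_lt h, if_neg h.ne']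

theorem memLp (n : ℕ) (p : ENNReal) :
    MemLp (rademacher n) p (volume.restrict (Set.Icc (0 : ℝ) 1)) :=
  .of_bound (measurable n).aestronglyMeasurable 1 (ae_of_all _ (abs_le_one n))

theorem norm_eq_one_of_ae_eq {n : ℕ} {x : Lp ℝ 1 (volume.restrict (Set.Icc (0 : ℝ) 1))}
    (hx : x =ᵐ[volume.restrict (Set.Icc (0 : ℝ) 1)] rademacher n) : ‖x‖ = 1 := by
  have hone : ∀ᵐ t ∂volume.restrict (Set.Icc (0 : ℝ) 1), ‖x t‖ = 1 := by
    filter_upwards [hx, ae_restrict_of_ae (abs_ae_eq_one n)] with t h1 h2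
    rw [h1, Real.norm_eq_abs, h2]
  rw [L1.norm_eq_integral_norm, integral_congr_ae hone]
  simp

end rademacher

/-- The set formed by the Rademacher functions together with `0` is a weakly compact subset of
`L¹[0,1]` which is not absolutely weakly sequentially compact. -/
theorem rademacher_weaklyCompact_not_absWeakSeqCompact
    (r : ℕ → Lp ℝ 1 (volume.restrict (Set.Icc (0:ℝ) 1)))
    (hr : ∀ n : ℕ, (r n : ℝ → ℝ) =ᵐ[volume.restrict (Set.Icc (0:ℝ) 1)]
      fun t => Real.sign (Real.sin (2 ^ n * Real.pi * t))) :
    @IsCompact _ (weakTopology (Lp ℝ 1 (volume.restrict (Set.Icc (0:ℝ) 1))))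
        (Set.range r ∪ {0}) ∧
      ¬ @IsSeqCompact _ (absWeakTopology (Lp ℝ 1 (volume.restrict (Set.Icc (0:ℝ) 1))))
        (Set.range r ∪ {0}) := by
  have hweak : ∀ f : Lp ℝ 1 (volume.restrict (Set.Icc (0:ℝ) 1)) →L[ℝ] ℝ,
      Tendsto (fun n => f (r n)) atTop (𝓝 0) :=
    tendsto_apply_zero_of_norm_sum_smul_le_sqrt <| norm_sum_smul_le_sqrt_of_orthonormal
      (fun n => rademacher.memLp n 2) rademacher.integral_mul hr
  refine ⟨?_, fun hseq => ?_⟩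
  · rw [Set.union_singleton]
    exact @Tendsto.isCompact_insert_range _ (weakTopology _) _ _
      (tendsto_weakTopology_iff.mpr fun f => by simpa using hweak f)
  · obtain ⟨a, -, φ, hφ, hconv⟩ := hseq fun n => Or.inl ⟨n, rfl⟩
    exact not_tendsto_of_norm_eq_one_of_tendsto_apply_zero
      (fun k => rademacher.norm_eq_one_of_ae_eq (hr (φ k)))
      (fun f => (hweak f).comp hφ.tendsto_atTop) a (tendsto_of_tendsto_absWeakTopology hconv)
end
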